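/- Let (M,d) be a metric space, E : M → ℝ, and x₀ ∈ M. For 0 < s < t, let u_s minimize v ↦ d²(v, x₀)/(2s) + E(v) over M and let u_t minimize v ↦ d²(v, x₀)/(2t) + E(v) over M. Then d(u_s, x₀) ≤ d(u_t, x₀). In particular, for any choice of minimizers, the function s ↦ d(u_s, x₀) is monotone nondecreasing on (0,∞). -/

import Mathlib

open MeasureTheory

/-- Adding the two minimality conditions, each tested at the other minimizer, cancels `E` and
leaves `(a - b) * (f x - f y) ≤ 0`. -/
theorem le_of_forall_mul_add_le {α : Type*} {f E : α → ℝ} {a b : ℝ} (hba : b < a) {x y : α}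
    (hx : ∀ v, a * f x + E x ≤ a * f v + E v) (hy : ∀ v, b * f y + E y ≤ b * f v + E v) :
    f x ≤ f y := by
  by_contra! hyx
  have hpos : 0 < (a - b) * (f x - f y) := mul_pos (sub_pos.2 hba) (sub_pos.2 hyx)
  linarith [hx y, hy x]

theorem stmt_5 {M : Type*} [MetricSpace M] (E : M → ℝ) (x₀ : M)
    (s t : ℝ) (hs : 0 < s) (hst : s < t) (us ut : M)
    (hmins : ∀ v : M, dist us x₀ ^ 2 / (2 * s) + E us ≤ dist v x₀ ^ 2 / (2 * s) + E v)
    (hmint : ∀ v : M, dist ut x₀ ^ 2 / (2 * t) + E ut ≤ dist v x₀ ^ 2 / (2 * t) + E v) :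
    dist us x₀ ≤ dist ut x₀ := by
  have hts : (2 * t)⁻¹ < (2 * s)⁻¹ := by gcongr
  have hsq : dist us x₀ ^ 2 ≤ dist ut x₀ ^ 2 :=
    le_of_forall_mul_add_le (f := fun v ↦ dist v x₀ ^ 2) hts
      (by simpa only [div_eq_inv_mul] using hmins) (by simpa only [div_eq_inv_mul] using hmint)
  exact (sq_le_sq₀ dist_nonneg dist_nonneg).1 hsq
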